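/- arXiv:2001.00276 — 2 statements merged into one kernel-verified Lean document; each statement's English description precedes it below -/
import Mathlib

section
/- Let X and Y be real vector spaces, Ω ⊆ X convex, and A : X → Y a surjective linear map. Then A(core(Ω)) ⊆ core(A(Ω)), where A(S) denotes the image of S under A. If in addition core(Ω) ≠ ∅, then A(core(Ω)) = core(A(Ω)). -/
/-!
A surjective linear map sends the lines through `x` onto all the lines through `A x`, which gives
`A (core Ω) ⊆ core (A Ω)`. Conversely, let `A x ∈ core (A Ω)` with `x ∈ Ω`, and pick `x₀ ∈ core Ω`.
Going a little beyond `A x` in the direction away from `A x₀` stays in `A Ω`, say at `A z` with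
`z ∈ Ω`. Then `A x` lies on the segment from `A x₀` to `A z`, short of `A z`, so it is the image of
the corresponding point of the segment from `x₀` to `z`, which lies in `core Ω` by convexity.
-/

/-- The algebraic core of a set `Ω` in a real vector space. -/
def algCore {X : Type*} [AddCommGroup X] [Module ℝ X] (Ω : Set X) : Set X :=
  {x | x ∈ Ω ∧ ∀ v : X, ∃ δ > (0 : ℝ), ∀ t : ℝ, |t| < δ → x + t • v ∈ Ω}

section AlgCore

variable {X Y : Type*} [AddCommGroup X] [Module ℝ X] [AddCommGroup Y] [Module ℝ Y]

theorem exists_pos_add_smul_mem_of_mem_algCore {Ω : Set X} {x : X} (hx : x ∈ algCore Ω)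
    (v : X) : ∃ t > (0 : ℝ), x + t • v ∈ Ω := by
  obtain ⟨δ, hδ, h⟩ := hx.2 v
  refine ⟨δ / 2, half_pos hδ, h _ ?_⟩
  rw [abs_of_pos (half_pos hδ)]
  exact half_lt_self hδ

theorem Convex.combo_algCore_self_mem_algCore {Ω : Set X} (hΩ : Convex ℝ Ω) {x y : X}
    (hx : x ∈ algCore Ω) (hy : y ∈ Ω) {a b : ℝ} (ha : 0 < a) (hb : 0 ≤ b) (hab : a + b = 1) :
    a • x + b • y ∈ algCore Ω := by
  refine ⟨hΩ hx.1 hy ha.le hb hab, fun v => ?_⟩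
  obtain ⟨δ, hδ, h⟩ := hx.2 (a⁻¹ • v)
  refine ⟨δ, hδ, fun t ht => ?_⟩
  have hshift : a • (x + t • a⁻¹ • v) + b • y = a • x + b • y + t • v := by
    rw [smul_add, smul_comm t, smul_smul, mul_inv_cancel₀ ha.ne', one_smul]
    abel
  simpa only [hshift] using hΩ (h t ht) hy ha.le hb hab

theorem image_algCore_subset_algCore_image {Ω : Set X} {A : X →ₗ[ℝ] Y}
    (hA : Function.Surjective A) : A '' algCore Ω ⊆ algCore (A '' Ω) := by
  rintro _ ⟨x, ⟨hxΩ, hx⟩, rfl⟩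
  refine ⟨Set.mem_image_of_mem A hxΩ, fun w => ?_⟩
  obtain ⟨v, rfl⟩ := hA w
  obtain ⟨δ, hδ, h⟩ := hx v
  exact ⟨δ, hδ, fun t ht => ⟨x + t • v, h t ht, by simp⟩⟩

theorem Convex.algCore_image_subset_image_algCore {Ω : Set X} (hΩ : Convex ℝ Ω)
    (hcore : (algCore Ω).Nonempty) (A : X →ₗ[ℝ] Y) : algCore (A '' Ω) ⊆ A '' algCore Ω := by
  obtain ⟨x₀, hx₀⟩ := hcore
  rintro _ hy
  obtain ⟨x, -, rfl⟩ := hy.1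
  obtain ⟨t, ht, z, hz, hAz⟩ := exists_pos_add_smul_mem_of_mem_algCore hy (A x - A x₀)
  have ht1 : 1 + t ≠ 0 := by positivity
  refine ⟨(t / (1 + t)) • x₀ + (1 / (1 + t)) • z,
    hΩ.combo_algCore_self_mem_algCore hx₀ hz (by positivity) (by positivity)
      (by field_simp; ring), ?_⟩
  rw [map_add, map_smul, map_smul, hAz]
  match_scalars
  · field_simp
    ring
  · field_simp

end AlgCore

theorem image_core_surjective {X Y : Type*} [AddCommGroup X] [Module ℝ X]
    [AddCommGroup Y] [Module ℝ Y]
    (Ω : Set X) (hΩ : Convex ℝ Ω) (A : X →ₗ[ℝ] Y) (hA : Function.Surjective A) :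
    A '' algCore Ω ⊆ algCore (A '' Ω) ∧
      ((algCore Ω).Nonempty → A '' algCore Ω = algCore (A '' Ω)) :=
  ⟨image_algCore_subset_algCore_image hA, fun hcore =>
    (image_algCore_subset_algCore_image hA).antisymm
      (hΩ.algCore_image_subset_image_algCore hcore A)⟩
end

section
/- Let X be a real vector space and Ω₁, Ω₂ ⊆ X convex sets with core(Ω₁) ≠ ∅ and core(Ω₂) ≠ ∅. Then Ω₁ and Ω₂ are properly separated if and only if core(Ω₁) ∩ core(Ω₂) = ∅. -/
/-- Two sets are properly separated if some nonzero linear functional separates them,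
with strict inequality at some pair of points. -/
def ProperlySeparated {X : Type*} [AddCommGroup X] [Module ℝ X] (Ω₁ Ω₂ : Set X) : Prop :=
  ∃ f : X →ₗ[ℝ] ℝ, f ≠ 0 ∧ (∀ x₁ ∈ Ω₁, ∀ x₂ ∈ Ω₂, f x₁ ≤ f x₂) ∧
    ∃ xb₁ ∈ Ω₁, ∃ xb₂ ∈ Ω₂, f xb₁ < f xb₂

/-!
A functional separating `Ω₁` from `Ω₂` attains its maximum over `Ω₁` at any common core point,
and a linear functional with a maximum at a core point vanishes. Conversely, cores of convex sets
are convex and algebraically open, so `D = core Ω₁ - core Ω₂` is convex, has nonempty core and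
avoids `0`. Translating a core point of `D` to the origin makes it absorbent, and Hahn–Banach
dominated by its gauge gives a functional that is `≤ 0` on `D` and `< 0` at that point. Every
point of a convex set ends a segment whose other points lie in the core, so the inequality passes
from the cores to `Ω₁` and `Ω₂`.
-/

open Filter Set Topology
open scoped Pointwise

section

variable {X : Type*} [AddCommGroup X] [Module ℝ X] {Ω A B : Set X} {a b x : X}

theorem mem_algCore_iff_eventually :
    x ∈ algCore Ω ↔ ∀ v : X, ∀ᶠ t : ℝ in 𝓝 0, x + t • v ∈ Ω := by
  simp only [Metric.eventually_nhds_iff, Real.dist_eq, sub_zero]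
  refine ⟨fun hx ↦ hx.2, fun hx ↦ ⟨?_, hx⟩⟩
  obtain ⟨δ, hδ, hδx⟩ := hx 0
  simpa using hδx (y := 0) (by simpa using hδ)

theorem algCore_subset : algCore Ω ⊆ Ω := fun _ hx ↦ hx.1

theorem sub_mem_algCore_sub (ha : a ∈ algCore A) (hb : b ∈ B) : a - b ∈ algCore (A - B) := by
  refine mem_algCore_iff_eventually.2 fun v ↦ ?_
  filter_upwards [mem_algCore_iff_eventually.1 ha v] with t ht
  exact Set.mem_sub.2 ⟨_, ht, b, hb, by abel⟩

theorem LinearMap.eq_zero_of_isMaxOn_algCore {f : X →ₗ[ℝ] ℝ} (hx : x ∈ algCore Ω)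
    (hmax : IsMaxOn f Ω x) : f = 0 := by
  ext v
  have hlocal : IsLocalMax (fun t : ℝ ↦ f x + t * f v) 0 := by
    filter_upwards [mem_algCore_iff_eventually.1 hx v] with t ht
    simpa using hmax ht
  have hderiv : HasDerivAt (fun t : ℝ ↦ f x + t * f v) (f v) 0 := by
    simpa using ((hasDerivAt_id 0).mul_const (f v)).const_add (f x)
  simpa using hlocal.hasDerivAt_eq_zero hderiv

namespace Convex

theorem combo_algCore_self_mem_algCore_s13 (hΩ : Convex ℝ Ω) (ha : a ∈ algCore Ω) (hx : x ∈ Ω)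
    {s t : ℝ} (hs : 0 < s) (ht : 0 ≤ t) (hst : s + t = 1) : s • a + t • x ∈ algCore Ω := by
  refine mem_algCore_iff_eventually.2 fun v ↦ ?_
  have hscale : Tendsto (fun r : ℝ ↦ r / s) (𝓝 0) (𝓝 0) := by
    simpa using (tendsto_id (x := 𝓝 (0 : ℝ))).div_const s
  filter_upwards [hscale.eventually (mem_algCore_iff_eventually.1 ha v)] with r hr
  convert hΩ hr hx hs.le ht hst using 1
  rw [smul_add, smul_smul, mul_div_cancel₀ r hs.ne']
  abel

theorem algCore_algCore (hΩ : Convex ℝ Ω) : algCore (algCore Ω) = algCore Ω := by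
  refine algCore_subset.antisymm fun a ha ↦ mem_algCore_iff_eventually.2 fun v ↦ ?_
  have hscale : Tendsto (fun t : ℝ ↦ 2 * t) (𝓝 0) (𝓝 0) := by
    simpa using (tendsto_id (x := 𝓝 (0 : ℝ))).const_mul 2
  filter_upwards [hscale.eventually (mem_algCore_iff_eventually.1 ha v)] with t ht
  convert hΩ.combo_algCore_self_mem_algCore_s13 ha ht (s := 1 / 2) (t := 1 / 2)
    (by norm_num) (by norm_num) (by norm_num) using 1
  module

protected theorem algCore (hΩ : Convex ℝ Ω) : Convex ℝ (algCore Ω) := by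
  intro a ha b hb s t hs ht hst
  rcases hs.eq_or_lt with rfl | hs
  · simpa [show t = 1 by linarith] using hb
  · exact hΩ.combo_algCore_self_mem_algCore_s13 ha (algCore_subset hb) hs ht hst

theorem apply_le_of_forall_algCore_le (hΩ : Convex ℝ Ω) (hc : (algCore Ω).Nonempty)
    {f : X →ₗ[ℝ] ℝ} {c : ℝ} (hf : ∀ y ∈ algCore Ω, f y ≤ c) (hx : x ∈ Ω) : f x ≤ c := by
  obtain ⟨a, ha⟩ := hc
  have hlim : Tendsto (fun t : ℝ ↦ (1 - t) * f a + t * f x) (𝓝[<] 1) (𝓝 (f x)) := by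
    have : Continuous fun t : ℝ ↦ (1 - t) * f a + t * f x := by fun_prop
    simpa using (this.tendsto 1).mono_left nhdsWithin_le_nhds
  refine le_of_tendsto hlim ?_
  filter_upwards [Ioo_mem_nhdsLT zero_lt_one] with t ht
  simpa using hf _ (hΩ.combo_algCore_self_mem_algCore_s13 ha hx (sub_pos.2 ht.2) ht.1.le (by ring))

end Convex

theorem absorbent_of_zero_mem_algCore (h : 0 ∈ algCore Ω) : Absorbent ℝ Ω :=
  absorbent_iff_eventually_nhdsNE_zero.2 fun v ↦ by
    simpa using (mem_algCore_iff_eventually.1 h v).filter_mono nhdsWithin_le_nhds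

theorem Convex.exists_linearMap_eq_one_le_one (hΩ : Convex ℝ Ω) (h0 : 0 ∈ algCore Ω)
    (hx : x ∉ Ω) : ∃ g : X →ₗ[ℝ] ℝ, g x = 1 ∧ ∀ y ∈ Ω, g y ≤ 1 := by
  have habs := absorbent_of_zero_mem_algCore h0
  have hx1 : 1 ≤ gauge Ω x := one_le_gauge_of_notMem (hΩ.starConvex h0.1) (habs x) hx
  let f : X →ₗ.[ℝ] ℝ := LinearPMap.mkSpanSingleton x 1 (ne_of_mem_of_not_mem h0.1 hx).symm
  have hf : ∀ y : f.domain, f y ≤ gauge Ω y := by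
    rintro ⟨y, hy⟩
    obtain ⟨c, rfl⟩ := Submodule.mem_span_singleton.1 hy
    rw [LinearPMap.mkSpanSingleton'_apply, smul_eq_mul, mul_one]
    rcases le_or_gt c 0 with hc | hc
    · exact hc.trans (gauge_nonneg _)
    · rw [gauge_smul_of_nonneg hc.le, smul_eq_mul]
      exact le_mul_of_one_le_right hc.le hx1
  obtain ⟨g, hgf, hg⟩ := exists_extension_of_le_sublinear f (gauge Ω)
    (fun c hc ↦ gauge_smul_of_nonneg hc.le) (gauge_add_le hΩ habs) hf
  refine ⟨g, ?_, fun y hy ↦ (hg y).trans (gauge_le_one_of_mem hy)⟩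
  rw [hgf ⟨x, Submodule.mem_span_singleton_self x⟩, LinearPMap.mkSpanSingleton_apply]

theorem Convex.exists_linearMap_neg_of_zero_notMem (hΩ : Convex ℝ Ω) (ha : a ∈ algCore Ω)
    (h0 : 0 ∉ Ω) : ∃ g : X →ₗ[ℝ] ℝ, g a < 0 ∧ ∀ y ∈ Ω, g y ≤ 0 := by
  have ha' : 0 ∈ algCore (Ω - {a}) := sub_self a ▸ sub_mem_algCore_sub ha (mem_singleton a)
  have hna : -a ∉ Ω - {a} := by
    rintro ⟨y, hy, _, rfl, hya⟩
    exact h0 (by rwa [show y = 0 by simpa using hya] at hy)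
  obtain ⟨g, hga, hg⟩ := (hΩ.sub (convex_singleton a)).exists_linearMap_eq_one_le_one ha' hna
  rw [map_neg, neg_eq_iff_eq_neg] at hga
  refine ⟨g, by linarith, fun y hy ↦ ?_⟩
  have := hg _ (sub_mem_sub hy (mem_singleton a))
  rw [map_sub] at this
  linarith

theorem Convex.apply_le_apply_of_forall_algCore {Ω₁ Ω₂ : Set X} (h₁ : Convex ℝ Ω₁)
    (h₂ : Convex ℝ Ω₂) (hc₁ : (algCore Ω₁).Nonempty) (hc₂ : (algCore Ω₂).Nonempty)
    {f : X →ₗ[ℝ] ℝ} (hf : ∀ a ∈ algCore Ω₁, ∀ b ∈ algCore Ω₂, f a ≤ f b) :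
    ∀ x₁ ∈ Ω₁, ∀ x₂ ∈ Ω₂, f x₁ ≤ f x₂ := by
  intro x₁ hx₁ x₂ hx₂
  have hx₁b : ∀ b ∈ algCore Ω₂, -f b ≤ -f x₁ := fun b hb ↦
    neg_le_neg (h₁.apply_le_of_forall_algCore_le hc₁ (fun a ha ↦ hf a ha b hb) hx₁)
  exact neg_le_neg_iff.1 (h₂.apply_le_of_forall_algCore_le hc₂ (f := -f) hx₁b hx₂)

end

theorem properly_separated_iff_core_disjoint {X : Type*} [AddCommGroup X] [Module ℝ X]
    (Ω₁ Ω₂ : Set X) (h₁ : Convex ℝ Ω₁) (h₂ : Convex ℝ Ω₂)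
    (hc₁ : (algCore Ω₁).Nonempty) (hc₂ : (algCore Ω₂).Nonempty) :
    ProperlySeparated Ω₁ Ω₂ ↔ algCore Ω₁ ∩ algCore Ω₂ = ∅ := by
  constructor
  · rintro ⟨f, hf, hle, -⟩
    refine eq_empty_iff_forall_notMem.2 fun x ⟨hx₁, hx₂⟩ ↦ hf ?_
    exact f.eq_zero_of_isMaxOn_algCore hx₁ fun y hy ↦ hle y hy x hx₂.1
  · intro hdisj
    obtain ⟨a₀, ha₀⟩ := hc₁
    obtain ⟨b₀, hb₀⟩ := hc₂
    have hd₀ : a₀ - b₀ ∈ algCore (algCore Ω₁ - algCore Ω₂) :=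
      sub_mem_algCore_sub (h₁.algCore_algCore.symm ▸ ha₀) hb₀
    have h0 : (0 : X) ∉ algCore Ω₁ - algCore Ω₂ :=
      zero_mem_sub_iff.not_left.2 (disjoint_iff_inter_eq_empty.2 hdisj)
    obtain ⟨g, hg₀, hg⟩ :=
      (h₁.algCore.sub h₂.algCore).exists_linearMap_neg_of_zero_notMem hd₀ h0
    have hcore : ∀ a ∈ algCore Ω₁, ∀ b ∈ algCore Ω₂, g a ≤ g b := fun a ha b hb ↦
      sub_nonpos.1 (map_sub g a b ▸ hg _ (sub_mem_sub ha hb))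
    rw [map_sub, sub_neg] at hg₀
    exact ⟨g, fun h ↦ by simp [h] at hg₀,
      h₁.apply_le_apply_of_forall_algCore h₂ ⟨a₀, ha₀⟩ ⟨b₀, hb₀⟩ hcore, a₀, ha₀.1, b₀, hb₀.1, hg₀⟩
end
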